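/- Let a = 2√π / 3^(1/4) and let T ⊆ ℝ² be the open equilateral triangle with vertices (0, 0), (a, 0), and (a/2, (√3/2)·a); its area equals π. There exists a function ψ: ℝ² → ℝ, smooth on ℝ², not identically zero, vanishing on the boundary of T, strictly positive at every point of T, and satisfying Δψ + (4π/√3)·ψ = 0 on T. In particular, the π-area equilateral triangle admits 4π/√3 as a Dirichlet eigenvalue with a positive eigenfunction (the fundamental eigenvalue λ(3) = 4π/√3). -/

import Mathlib

open Real Set

/-- The Laplacian of `f : ℝ × ℝ → ℝ` at a point, as the sum of the two
pure second partial derivatives. -/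
noncomputable def lap (f : ℝ × ℝ → ℝ) (p : ℝ × ℝ) : ℝ :=
  deriv (deriv (fun x => f (x, p.2))) p.1 + deriv (deriv (fun y => f (p.1, y))) p.2

section EquilateralAux
open MeasureTheory intervalIntegral

open MeasureTheory intervalIntegral

noncomputable def triC (a : ℝ) : Set (ℝ × ℝ) :=
  {p | 0 ≤ p.2 ∧ p.2 ≤ Real.sqrt 3 * p.1 ∧ Real.sqrt 3 * p.1 + p.2 ≤ Real.sqrt 3 * a}

noncomputable def triO (a : ℝ) : Set (ℝ × ℝ) :=
  {p | 0 < p.2 ∧ p.2 < Real.sqrt 3 * p.1 ∧ Real.sqrt 3 * p.1 + p.2 < Real.sqrt 3 * a}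

lemma isOpen_triO (a : ℝ) : IsOpen (triO a) := by
  have : triO a = {p : ℝ × ℝ | 0 < p.2} ∩
      ({p : ℝ × ℝ | p.2 < Real.sqrt 3 * p.1} ∩
       {p : ℝ × ℝ | Real.sqrt 3 * p.1 + p.2 < Real.sqrt 3 * a}) := rfl
  rw [this]
  refine IsOpen.inter ?_ (IsOpen.inter ?_ ?_)
  · exact isOpen_lt continuous_const continuous_snd
  · exact isOpen_lt continuous_snd (continuous_const.mul continuous_fst)
  · exact isOpen_lt ((continuous_const.mul continuous_fst).add continuous_snd) continuous_const

lemma isClosed_triC (a : ℝ) : IsClosed (triC a) := by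
  have : triC a = {p : ℝ × ℝ | 0 ≤ p.2} ∩
      ({p : ℝ × ℝ | p.2 ≤ Real.sqrt 3 * p.1} ∩
       {p : ℝ × ℝ | Real.sqrt 3 * p.1 + p.2 ≤ Real.sqrt 3 * a}) := rfl
  rw [this]
  refine IsClosed.inter ?_ (IsClosed.inter ?_ ?_)
  · exact isClosed_le continuous_const continuous_snd
  · exact isClosed_le continuous_snd (continuous_const.mul continuous_fst)
  · exact isClosed_le ((continuous_const.mul continuous_fst).add continuous_snd) continuous_const

lemma not_interior (a : ℝ) {p : ℝ × ℝ} (v : ℝ × ℝ) (hv : ∀ t : ℝ, 0 < t → p + t • v ∉ triC a)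
    (hvn : max |v.1| |v.2| ≤ 1) : p ∉ interior (triC a) := by
  intro hp
  obtain ⟨ε, hε, hball⟩ := Metric.isOpen_iff.mp isOpen_interior p hp
  refine hv (ε/2) (by linarith) (interior_subset (hball ?_))
  rw [Metric.mem_ball, Prod.dist_eq]
  have h1 : dist (p + (ε/2) • v).1 p.1 = (ε/2) * |v.1| := by
    simp [Real.dist_eq, abs_mul, abs_of_pos (by linarith : (0:ℝ) < ε/2), abs_of_pos hε]
  have h2 : dist (p + (ε/2) • v).2 p.2 = (ε/2) * |v.2| := by
    simp [Real.dist_eq, abs_mul, abs_of_pos (by linarith : (0:ℝ) < ε/2), abs_of_pos hε]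
  rw [h1, h2]
  have := le_max_left |v.1| |v.2|
  have := le_max_right |v.1| |v.2|
  rw [max_lt_iff]
  constructor <;> nlinarith

lemma interior_triC (a : ℝ) (ha : 0 < a) : interior (triC a) = triO a := by
  have hs3 : (0:ℝ) < Real.sqrt 3 := Real.sqrt_pos.mpr (by norm_num)
  apply subset_antisymm
  · intro p hp
    have hpC : p ∈ triC a := interior_subset hp
    obtain ⟨h1, h2, h3⟩ := hpC
    refine ⟨?_, ?_, ?_⟩
    · rcases eq_or_lt_of_le h1 with h | h
      · exfalso
        refine not_interior a ((0:ℝ), (-1:ℝ)) ?_ (by norm_num) hp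
        intro t ht hmem
        obtain ⟨k1, _, _⟩ := hmem
        simp only [Prod.snd_add, Prod.smul_def, smul_eq_mul] at k1
        simp at k1
        nlinarith [k1]
      · exact h
    · rcases eq_or_lt_of_le h2 with h | h
      · exfalso
        refine not_interior a ((-1:ℝ), (1:ℝ)) ?_ (by norm_num) hp
        intro t ht hmem
        obtain ⟨_, k2, _⟩ := hmem
        simp only [Prod.snd_add, Prod.fst_add, Prod.smul_def, smul_eq_mul] at k2
        nlinarith [k2]
      · exact h
    · rcases eq_or_lt_of_le h3 with h | h
      swap
      · exact h
      exfalso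
      refine not_interior a ((1:ℝ), (1:ℝ)) ?_ (by norm_num) hp
      intro t ht hmem
      obtain ⟨_, _, k3⟩ := hmem
      simp only [Prod.snd_add, Prod.fst_add, Prod.smul_def, smul_eq_mul] at k3
      nlinarith [k3, hs3]
  · apply interior_maximal _ (isOpen_triO a)
    rintro p ⟨h1, h2, h3⟩
    exact ⟨h1.le, h2.le, h3.le⟩



lemma convex_triC (a : ℝ) : Convex ℝ (triC a) := by
  rintro ⟨x1, y1⟩ ⟨h1, h2, h3⟩ ⟨x2, y2⟩ ⟨k1, k2, k3⟩ s t hs ht hst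
  refine ⟨?_, ?_, ?_⟩ <;>
    simp only [Prod.smul_def, smul_eq_mul, Prod.mk_add_mk, Prod.fst_add, Prod.snd_add,
      Prod.fst, Prod.snd] <;> nlinarith [mul_le_mul_of_nonneg_left h2 hs,
      mul_le_mul_of_nonneg_left k2 ht, mul_le_mul_of_nonneg_left h3 hs,
      mul_le_mul_of_nonneg_left k3 ht, mul_nonneg hs h1, mul_nonneg ht k1]

lemma hull_eq (a : ℝ) (ha : 0 < a) :
    convexHull ℝ {((0:ℝ),(0:ℝ)), (a,0), (a/2, Real.sqrt 3 / 2 * a)} = triC a := by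
  have hs3 : (0:ℝ) < Real.sqrt 3 := Real.sqrt_pos.mpr (by norm_num)
  have h3ne : Real.sqrt 3 ≠ 0 := ne_of_gt hs3
  have hs3' : Real.sqrt 3 ^ 2 = 3 := Real.sq_sqrt (by norm_num)
  apply subset_antisymm
  · apply convexHull_min _ (convex_triC a)
    rintro p hp
    simp only [mem_insert_iff, mem_singleton_iff] at hp
    rcases hp with rfl | rfl | rfl
    · refine ⟨le_refl _, by simp, by simp; positivity⟩
    · exact ⟨le_refl _, by simp; positivity, by simp⟩
    · refine ⟨by positivity, ?_, ?_⟩ <;> simp <;> nlinarith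
  · rintro ⟨x, y⟩ ⟨h1, h2, h3⟩
    simp only [triC, mem_setOf_eq] at h1 h2 h3
    set S := ({((0:ℝ),(0:ℝ)), (a,0), (a/2, Real.sqrt 3 / 2 * a)} : Set (ℝ × ℝ))
    have hv0 : ((0:ℝ),(0:ℝ)) ∈ convexHull ℝ S := subset_convexHull ℝ S (by simp [S])
    have hv1 : ((a:ℝ),(0:ℝ)) ∈ convexHull ℝ S := subset_convexHull ℝ S (by simp [S])
    have hv2 : ((a/2:ℝ), Real.sqrt 3 / 2 * a) ∈ convexHull ℝ S :=
      subset_convexHull ℝ S (by simp [S])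
    have hconv := convex_convexHull ℝ S
    set β : ℝ := (x - y / Real.sqrt 3) / a with hβ
    set γ : ℝ := 2 * y / (Real.sqrt 3 * a) with hγ
    have hd : y / Real.sqrt 3 * Real.sqrt 3 = y := div_mul_cancel₀ y h3ne
    have hβ0 : 0 ≤ β := by
      apply div_nonneg _ ha.le
      rw [sub_nonneg, div_le_iff₀ hs3]
      nlinarith
    have hγ0 : 0 ≤ γ := by positivity
    have hβγ : β + γ ≤ 1 := by
      rw [hβ, hγ, div_add_div _ _ (by positivity) (by positivity), div_le_one (by positivity)]
      nlinarith
    set t : ℝ := β + γ with ht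
    have hβx : β * a = x - y / Real.sqrt 3 := by rw [hβ]; field_simp; try ring
    have hγy : γ * (Real.sqrt 3 / 2 * a) = y := by rw [hγ]; field_simp; try ring
    have hγa : γ * (a / 2) = y / Real.sqrt 3 := by rw [hγ]; field_simp; try ring
    have hv : β • ((a:ℝ),(0:ℝ)) + γ • ((a/2:ℝ), Real.sqrt 3 / 2 * a) = (x, y) := by
      ext <;> simp only [Prod.smul_def, smul_eq_mul, Prod.fst_add, Prod.snd_add,
        Prod.fst, Prod.snd, mul_zero, zero_add, add_zero]
      · linarith [hβx, hγa]
      · linarith [hγy]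
    rcases eq_or_lt_of_le (add_nonneg hβ0 hγ0) with h0 | h0
    · have hγ' : γ = 0 := by linarith
      have hβ' : β = 0 := by linarith
      have hy : y = 0 := by
        have := hγ.symm ▸ hγ'
        field_simp at this; linarith
      have hx : x = 0 := by
        have := hβ.symm ▸ hβ'
        field_simp at this
        rw [hy] at this; simpa using this
      rw [hx, hy]; exact hv0
    · have htne : t ≠ 0 := ne_of_gt h0
      have hq : (β/t) • ((a:ℝ),(0:ℝ)) + (γ/t) • ((a/2:ℝ), Real.sqrt 3 / 2 * a)
          ∈ convexHull ℝ S := by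
        apply hconv hv1 hv2 (by positivity) (by positivity)
        field_simp
        linarith
      have h' := hconv hq hv0 (le_of_lt h0) (by linarith : (0:ℝ) ≤ 1 - t) (by ring)
      have hts : t • ((β/t) • ((a:ℝ),(0:ℝ)) + (γ/t) • ((a/2:ℝ), Real.sqrt 3 / 2 * a))
          = β • ((a:ℝ),(0:ℝ)) + γ • ((a/2:ℝ), Real.sqrt 3 / 2 * a) := by
        rw [smul_add, smul_smul, smul_smul]
        congr 2 <;> field_simp
      rw [hts, Prod.mk_zero_zero, smul_zero, add_zero, hv] at h'
      exact h'


lemma volume_triO (a : ℝ) (ha : 0 < a) :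
    volume (triO a) = ENNReal.ofReal (Real.sqrt 3 * a^2 / 4) := by
  have hs3 : (0:ℝ) < Real.sqrt 3 := Real.sqrt_pos.mpr (by norm_num)
  set g : ℝ → ℝ := fun x => min (Real.sqrt 3 * x) (Real.sqrt 3 * a - Real.sqrt 3 * x) with hg
  have hgc : Continuous g := ((continuous_const.mul continuous_id).min
    (continuous_const.sub (continuous_const.mul continuous_id)))
  have hset : triO a = regionBetween (fun _ => (0:ℝ)) g (Ioo 0 a) := by
    ext ⟨x, y⟩
    simp only [triO, regionBetween, mem_setOf_eq, mem_Ioo, lt_min_iff, hg]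
    constructor
    · rintro ⟨h1, h2, h3⟩
      have hx0 : 0 < x := by nlinarith
      have hxa : x < a := by nlinarith
      exact ⟨⟨hx0, hxa⟩, h1, h2, by linarith⟩
    · rintro ⟨-, h1, h2, h3⟩
      exact ⟨h1, h2, by linarith⟩
  rw [hset, MeasureTheory.Measure.volume_eq_prod]
  rw [volume_regionBetween_eq_integral
    (integrableOn_const measure_Ioo_lt_top.ne)
    ((intervalIntegrable_iff_integrableOn_Ioo_of_le ha.le).mp (hgc.intervalIntegrable _ _)) measurableSet_Ioo
    (fun x hx => by
      simp only [mem_Ioo] at hx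
      simp only [hg, le_min_iff]
      constructor <;> nlinarith [hx.1, hx.2])]
  congr 1
  simp only [Pi.sub_apply, sub_zero]
  rw [← MeasureTheory.integral_Ioc_eq_integral_Ioo,
    ← intervalIntegral.integral_of_le ha.le]
  have hint1 : IntervalIntegrable g volume 0 (a/2) := hgc.intervalIntegrable _ _
  have hint2 : IntervalIntegrable g volume (a/2) a := hgc.intervalIntegrable _ _
  rw [← intervalIntegral.integral_add_adjacent_intervals hint1 hint2]
  have e1 : ∫ x in (0:ℝ)..(a/2), g x = ∫ x in (0:ℝ)..(a/2), Real.sqrt 3 * x := by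
    apply intervalIntegral.integral_congr
    intro x hx
    rw [uIcc_of_le (by linarith)] at hx
    obtain ⟨hx1, hx2⟩ := hx
    simp only [hg]
    apply min_eq_left
    nlinarith
  have e2 : ∫ x in (a/2)..a, g x
      = ∫ x in (a/2)..a, (Real.sqrt 3 * a - Real.sqrt 3 * x) := by
    apply intervalIntegral.integral_congr
    intro x hx
    rw [uIcc_of_le (by linarith)] at hx
    obtain ⟨hx1, hx2⟩ := hx
    simp only [hg]
    apply min_eq_right
    nlinarith
  rw [e1, e2, intervalIntegral.integral_const_mul, integral_id,
    intervalIntegral.integral_sub (intervalIntegrable_const)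
      ((by fun_prop : Continuous fun x : ℝ => Real.sqrt 3 * x).intervalIntegrable _ _),
    intervalIntegral.integral_const, intervalIntegral.integral_const_mul, integral_id]
  simp only [smul_eq_mul]
  ring


noncomputable def psiF (a : ℝ) : ℝ × ℝ → ℝ := fun p =>
  2 * Real.sin (2*Real.pi/(Real.sqrt 3*a) * p.2) *
    (Real.cos (2*Real.pi/(Real.sqrt 3*a) * p.2) - Real.cos (2*Real.pi/a * p.1))

lemma contDiff_psiF (a : ℝ) : ContDiff ℝ (⊤ : ℕ∞) (psiF a) := by
  have h1 : ContDiff ℝ (⊤ : ℕ∞) fun p : ℝ × ℝ => Real.sin (2*Real.pi/(Real.sqrt 3*a) * p.2) :=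
    Real.contDiff_sin.comp (contDiff_const.mul contDiff_snd)
  have h2 : ContDiff ℝ (⊤ : ℕ∞) fun p : ℝ × ℝ => Real.cos (2*Real.pi/(Real.sqrt 3*a) * p.2) :=
    Real.contDiff_cos.comp (contDiff_const.mul contDiff_snd)
  have h3 : ContDiff ℝ (⊤ : ℕ∞) fun p : ℝ × ℝ => Real.cos (2*Real.pi/a * p.1) :=
    Real.contDiff_cos.comp (contDiff_const.mul contDiff_fst)
  exact (contDiff_const.mul h1).mul (h2.sub h3)

lemma hasDerivAt_cos_mul (b x : ℝ) :
    HasDerivAt (fun x => Real.cos (b*x)) (-(Real.sin (b*x)) * b) x := by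
  simpa using ((hasDerivAt_id x).const_mul b).cos

lemma hasDerivAt_sin_mul (b x : ℝ) :
    HasDerivAt (fun x => Real.sin (b*x)) (Real.cos (b*x) * b) x := by
  simpa using ((hasDerivAt_id x).const_mul b).sin

lemma lap_psiF (a : ℝ) (ha : a ≠ 0) (p : ℝ × ℝ) :
    lap (psiF a) p = -(4 * (2*Real.pi/(Real.sqrt 3*a))^2) * psiF a p := by
  have hs3 : (0:ℝ) < Real.sqrt 3 := Real.sqrt_pos.mpr (by norm_num)
  have hs3' : Real.sqrt 3 ^ 2 = 3 := Real.sq_sqrt (by norm_num)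
  set c : ℝ := 2*Real.pi/(Real.sqrt 3*a) with hc
  set b : ℝ := 2*Real.pi/a with hb
  have hb3 : b = Real.sqrt 3 * c := by
    rw [hb, hc]; field_simp
  -- x-direction
  have d1 : deriv (fun x => psiF a (x, p.2))
      = fun x => 2 * Real.sin (c*p.2) * (Real.sin (b*x) * b) := by
    funext x
    have h := ((hasDerivAt_cos_mul b x).const_sub (Real.cos (c*p.2))).const_mul
      (2 * Real.sin (c*p.2))
    have h' : HasDerivAt (fun x => psiF a (x, p.2))
        (2 * Real.sin (c*p.2) * (Real.sin (b*x) * b)) x := by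
      exact h.congr_deriv (by ring)
    exact h'.deriv
  have d2 : deriv (deriv (fun x => psiF a (x, p.2))) p.1
      = 2 * Real.sin (c*p.2) * (Real.cos (b*p.1) * b * b) := by
    rw [d1]
    have h := ((hasDerivAt_sin_mul b p.1).mul_const b).const_mul (2 * Real.sin (c*p.2))
    have h' : HasDerivAt (fun x => 2 * Real.sin (c*p.2) * (Real.sin (b*x) * b))
        (2 * Real.sin (c*p.2) * (Real.cos (b*p.1) * b * b)) p.1 := by
      convert h using 1
      try ring
    exact h'.deriv
  -- y-direction
  have e1 : deriv (fun y => psiF a (p.1, y))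
      = fun y => 2 * (Real.cos (c*y) * c) * (Real.cos (c*y) - Real.cos (b*p.1))
          + 2 * Real.sin (c*y) * (-(Real.sin (c*y)) * c) := by
    funext y
    have h := (((hasDerivAt_sin_mul c y).const_mul 2).mul
      ((hasDerivAt_cos_mul c y).sub_const (Real.cos (b*p.1))))
    have h' : HasDerivAt (fun y => psiF a (p.1, y))
        (2 * (Real.cos (c*y) * c) * (Real.cos (c*y) - Real.cos (b*p.1))
          + 2 * Real.sin (c*y) * (-(Real.sin (c*y)) * c)) y := by
      exact h.congr_deriv (by ring)
    exact h'.deriv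
  have e2 : deriv (deriv (fun y => psiF a (p.1, y))) p.2
      = 2 * (-(Real.sin (c*p.2)) * c * c) * (Real.cos (c*p.2) - Real.cos (b*p.1))
        + 2 * (Real.cos (c*p.2) * c) * (-(Real.sin (c*p.2)) * c)
        + (2 * (Real.cos (c*p.2) * c) * (-(Real.sin (c*p.2)) * c)
          + 2 * Real.sin (c*p.2) * (-(Real.cos (c*p.2) * c) * c)) := by
    rw [e1]
    have h1 := (((hasDerivAt_cos_mul c p.2).mul_const c).const_mul 2).mul
      ((hasDerivAt_cos_mul c p.2).sub_const (Real.cos (b*p.1)))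
    have h2 := (((hasDerivAt_sin_mul c p.2).const_mul 2).mul
      (((hasDerivAt_sin_mul c p.2).neg).mul_const c))
    have h := h1.add h2
    have h' : HasDerivAt (fun y => 2 * (Real.cos (c*y) * c) * (Real.cos (c*y) - Real.cos (b*p.1))
          + 2 * Real.sin (c*y) * (-(Real.sin (c*y)) * c))
        (2 * (-(Real.sin (c*p.2)) * c * c) * (Real.cos (c*p.2) - Real.cos (b*p.1))
        + 2 * (Real.cos (c*p.2) * c) * (-(Real.sin (c*p.2)) * c)
        + (2 * (Real.cos (c*p.2) * c) * (-(Real.sin (c*p.2)) * c)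
          + 2 * Real.sin (c*p.2) * (-(Real.cos (c*p.2) * c) * c))) p.2 := by
      exact h.congr_deriv (by simp only [Pi.neg_apply])
    exact h'.deriv
  have hbsq : b^2 = 3 * c^2 := by rw [hb3, mul_pow, hs3']
  unfold lap
  rw [d2, e2]
  unfold psiF
  rw [← hc, ← hb]
  linear_combination (2 * Real.sin (c*p.2) * Real.cos (b*p.1)) * hbsq




lemma psiF_boundary (a : ℝ) (ha : 0 < a) {p : ℝ × ℝ} (hp : p ∈ triC a) (hp' : p ∉ triO a) :
    psiF a p = 0 := by
  have hs3 : (0:ℝ) < Real.sqrt 3 := Real.sqrt_pos.mpr (by norm_num)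
  have h3ne : Real.sqrt 3 ≠ 0 := ne_of_gt hs3
  obtain ⟨h1, h2, h3⟩ := hp
  simp only [triO, mem_setOf_eq, not_and_or, not_lt] at hp'
  unfold psiF
  rcases hp' with h | h | h
  · have hy : p.2 = 0 := le_antisymm h h1
    rw [hy]
    simp
  · have hy : p.2 = Real.sqrt 3 * p.1 := le_antisymm h2 h
    have : 2*Real.pi/(Real.sqrt 3*a) * p.2 = 2*Real.pi/a * p.1 := by
      rw [hy]; field_simp
    rw [this]
    ring
  · have hy : Real.sqrt 3 * p.1 + p.2 = Real.sqrt 3 * a := le_antisymm h3 h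
    have hy' : p.2 = Real.sqrt 3 * (a - p.1) := by linarith
    have : 2*Real.pi/(Real.sqrt 3*a) * p.2 = 2*Real.pi - 2*Real.pi/a * p.1 := by
      rw [hy']; field_simp
    rw [this, Real.cos_two_pi_sub]
    ring

lemma psiF_pos (a : ℝ) (ha : 0 < a) {p : ℝ × ℝ} (hp : p ∈ triO a) : 0 < psiF a p := by
  have hs3 : (0:ℝ) < Real.sqrt 3 := Real.sqrt_pos.mpr (by norm_num)
  have hπ := Real.pi_pos
  obtain ⟨h1, h2, h3⟩ := hp
  have hx0 : 0 < p.1 := by nlinarith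
  have hxa : p.1 < a := by nlinarith
  have h2y : 2 * p.2 < Real.sqrt 3 * a := by nlinarith
  set c : ℝ := 2*Real.pi/(Real.sqrt 3*a) with hc
  set b : ℝ := 2*Real.pi/a with hb
  have hcpos : 0 < c := by positivity
  have hbpos : 0 < b := by positivity
  have hcy0 : 0 < c * p.2 := mul_pos hcpos h1
  have hcyπ : c * p.2 < Real.pi := by
    rw [hc, div_mul_eq_mul_div, div_lt_iff₀ (by positivity)]
    nlinarith
  have hsin : 0 < Real.sin (c * p.2) := Real.sin_pos_of_pos_of_lt_pi hcy0 hcyπ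
  have hbx0 : 0 < b * p.1 := mul_pos hbpos hx0
  have hkey : Real.cos (b * p.1) < Real.cos (c * p.2) := by
    rcases le_or_gt (b * p.1) Real.pi with hcase | hcase
    · have hlt : c * p.2 < b * p.1 := by
        rw [hc, hb, div_mul_eq_mul_div, div_mul_eq_mul_div,
          div_lt_div_iff₀ (by positivity) (by positivity)]
        nlinarith [mul_lt_mul_of_pos_left h2 (by positivity : (0:ℝ) < 2*Real.pi*a)]
      exact Real.cos_lt_cos_of_nonneg_of_le_pi hcy0.le hcase hlt
    · have hbx2π : b * p.1 < 2 * Real.pi := by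
        rw [hb, div_mul_eq_mul_div, div_lt_iff₀ ha]
        nlinarith
      have : Real.cos (b * p.1) = Real.cos (2 * Real.pi - b * p.1) := by
        rw [Real.cos_two_pi_sub]
      rw [this]
      apply Real.cos_lt_cos_of_nonneg_of_le_pi hcy0.le (by linarith)
      -- c * p.2 < 2π - b * p.1
      have : c * p.2 + b * p.1 < 2 * Real.pi := by
        rw [hc, hb, div_mul_eq_mul_div, div_mul_eq_mul_div, div_add_div _ _ (by positivity)
          (ne_of_gt ha), div_lt_iff₀ (by positivity)]
        nlinarith [mul_lt_mul_of_pos_left h3 (by positivity : (0:ℝ) < 2*Real.pi*a)]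
      linarith
  unfold psiF
  rw [← hc, ← hb]
  have : 0 < Real.cos (c * p.2) - Real.cos (b * p.1) := by linarith
  positivity
end EquilateralAux

/-- Let `T` be the open equilateral triangle with vertices `(0,0)`, `(a,0)`,
`(a/2, (√3/2)a)` where `a = 2√π/3^(1/4)`; its area is `π`, and there is a smooth
function, not identically zero, vanishing on `∂T`, strictly positive on `T`,
satisfying `Δψ + (4π/√3)·ψ = 0` on `T`: the π-area equilateral triangle has
fundamental Dirichlet eigenvalue `λ(3) = 4π/√3`. -/
theorem equilateral_triangle_fundamental_eigenvalue :
    let a : ℝ := 2 * Real.sqrt Real.pi / (3 : ℝ) ^ ((1 : ℝ) / 4)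
    let T : Set (ℝ × ℝ) :=
      interior (convexHull ℝ {((0 : ℝ), (0 : ℝ)), (a, 0), (a / 2, Real.sqrt 3 / 2 * a)})
    MeasureTheory.volume T = ENNReal.ofReal Real.pi ∧
    ∃ ψ : ℝ × ℝ → ℝ, ContDiff ℝ (⊤ : ℕ∞) ψ ∧ ψ ≠ 0 ∧
      (∀ p ∈ frontier T, ψ p = 0) ∧
      (∀ p ∈ T, 0 < ψ p) ∧
      (∀ p ∈ T, lap ψ p + (4 * Real.pi / Real.sqrt 3) * ψ p = 0) := by
  intro a T
  have hs3 : (0:ℝ) < Real.sqrt 3 := Real.sqrt_pos.mpr (by norm_num)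
  have hs3' : Real.sqrt 3 ^ 2 = 3 := Real.sq_sqrt (by norm_num)
  have hπ := Real.pi_pos
  have ha : 0 < a := by
    show (0:ℝ) < 2 * Real.sqrt Real.pi / (3 : ℝ) ^ ((1 : ℝ) / 4)
    have := Real.sqrt_pos.mpr hπ
    have := Real.rpow_pos_of_pos (show (0:ℝ) < 3 by norm_num) ((1:ℝ)/4)
    positivity
  have hkey : a ^ 2 * Real.sqrt 3 = 4 * Real.pi := by
    show (2 * Real.sqrt Real.pi / (3:ℝ) ^ ((1:ℝ)/4))^2 * Real.sqrt 3 = 4 * Real.pi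
    have h3 : ((3:ℝ) ^ ((1:ℝ)/4))^2 = Real.sqrt 3 := by
      rw [← Real.rpow_natCast ((3:ℝ) ^ ((1:ℝ)/4)) 2, ← Real.rpow_mul (by norm_num)]
      rw [Real.sqrt_eq_rpow]; norm_num
    have hq : (0:ℝ) < (3:ℝ) ^ ((1:ℝ)/4) := Real.rpow_pos_of_pos (by norm_num) _
    have hp : Real.sqrt Real.pi ^ 2 = Real.pi := Real.sq_sqrt hπ.le
    field_simp
    nlinarith [hp, h3, hq, hs3]
  have hT : T = triO a := by
    show interior (convexHull ℝ {((0:ℝ),(0:ℝ)), (a,0), (a/2, Real.sqrt 3 / 2 * a)}) = triO a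
    rw [hull_eq a ha, interior_triC a ha]
  constructor
  · rw [hT, volume_triO a ha]
    congr 1
    nlinarith [hkey]
  · refine ⟨psiF a, contDiff_psiF a, ?_, ?_, ?_, ?_⟩
    · intro h
      have hq : ((a/2 : ℝ), Real.sqrt 3 / 4 * a) ∈ triO a := by
        refine ⟨by positivity, ?_, ?_⟩ <;> simp only [triO, mem_setOf_eq] <;> nlinarith
      have := psiF_pos a ha hq
      rw [h] at this
      simp at this
    · intro p hp
      rw [hT] at hp
      have hfr : p ∈ triC a \ triO a := by
        have h1 : frontier (triO a) ⊆ closure (triO a) \ triO a := by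
          rw [frontier]
          apply diff_subset_diff_right
          rw [(isOpen_triO a).interior_eq]
        have h2 : closure (triO a) ⊆ triC a := by
          apply closure_minimal _ (isClosed_triC a)
          rintro q ⟨k1, k2, k3⟩
          exact ⟨k1.le, k2.le, k3.le⟩
        exact ⟨h2 ((h1 hp).1), (h1 hp).2⟩
      exact psiF_boundary a ha hfr.1 hfr.2
    · intro p hp
      rw [hT] at hp
      exact psiF_pos a ha hp
    · intro p hp
      have hlam : 4 * Real.pi / Real.sqrt 3 = 4 * (2*Real.pi/(Real.sqrt 3*a))^2 := by
        have h3a : 3 * a^2 = 4 * Real.pi * Real.sqrt 3 := by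
          linear_combination Real.sqrt 3 * hkey - a^2 * hs3'
        field_simp
        nlinarith [h3a, hπ, hs3, sq_nonneg a]
      rw [lap_psiF a (ne_of_gt ha) p, hlam]
      ring
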